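/- For all integers m, n with 1 ≤ n ≤ m, the monochromatic tree partition number of the 2-edge-colored complete bipartite graph K(m,n) satisfies t_2(K(m,n)) = ⌊(m − 2)/2^n⌋ + 2. That is, every 2-edge-coloring of K(m,n) admits a partition of its vertex set into at most ⌊(m − 2)/2^n⌋ + 2 vertex-disjoint monochromatic trees, and there is a 2-edge-coloring of K(m,n) for which no partition into fewer vertex-disjoint monochromatic trees exists. -/

import Mathlib

/-!
Common definitions for edge-colored complete bipartite graphs.

The complete bipartite graph `K(A,B)` with partite sets `α` and `β` is modeled on the
vertex type `α ⊕ β`; an edge-coloring with color type `γ` is a function `c : α → β → γ`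
(giving the color of the edge between `a : α` and `b : β`).
-/

/-- The spanning subgraph of the complete bipartite graph on parts `α`, `β` consisting of
the edges of color `k`, under the edge-coloring `c`. -/
def biColorGraph {α β γ : Type*} (c : α → β → γ) (k : γ) : SimpleGraph (α ⊕ β) where
  Adj x y := (∃ a b, x = Sum.inl a ∧ y = Sum.inr b ∧ c a b = k) ∨
             (∃ a b, x = Sum.inr b ∧ y = Sum.inl a ∧ c a b = k)
  symm := by
    constructor
    rintro x y (⟨a, b, hx, hy, hc⟩ | ⟨a, b, hx, hy, hc⟩)
    · exact Or.inr ⟨a, b, hy, hx, hc⟩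
    · exact Or.inl ⟨a, b, hy, hx, hc⟩
  loopless := by
    constructor
    rintro x (⟨a, b, hx, hy, _⟩ | ⟨a, b, hx, hy, _⟩) <;> subst hx <;> simp at hy

/-- `S` is the vertex set of a monochromatic tree: it induces a connected subgraph in some
color class.  (A single vertex also counts as a monochromatic tree.) -/
def IsMonoTreeSet {α β γ : Type*} (c : α → β → γ) (S : Set (α ⊕ β)) : Prop :=
  ∃ k, ((biColorGraph c k).induce S).Connected

/-- `P` is a partition of the vertex set of the complete bipartite graph into
(nonempty, pairwise vertex-disjoint) vertex sets of monochromatic trees. -/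
def IsMonoTreePartition {α β γ : Type*} (c : α → β → γ) (P : Finset (Set (α ⊕ β))) : Prop :=
  (∀ S ∈ P, IsMonoTreeSet c S) ∧ ∀ x : α ⊕ β, ∃! S, S ∈ P ∧ x ∈ S

/-- The vertex set can be partitioned into at most `m` vertex-disjoint monochromatic trees. -/
def HasMonoTreePartition {α β γ : Type*} (c : α → β → γ) (m : ℕ) : Prop :=
  ∃ P : Finset (Set (α ⊕ β)), IsMonoTreePartition c P ∧ P.card ≤ m

/-- Every vertex has color degree 3, i.e. all three colors appear on its incident edges. -/
def ColorDegreeThree {α β : Type*} (c : α → β → Fin 3) : Prop :=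
  (∀ (a : α) (k : Fin 3), ∃ b, c a b = k) ∧ ∀ (b : β) (k : Fin 3), ∃ a, c a b = k

/-! For 2-edge-colorings we use `Bool` as the color type: `true` = blue, `false` = green. -/

/-- The vertices of `α` all of whose incident edges are blue. -/
def XA {α β : Type*} (c : α → β → Bool) : Set α := {a | ∀ b, c a b = true}

/-- The vertices of `α` all of whose incident edges are green. -/
def YA {α β : Type*} (c : α → β → Bool) : Set α := {a | ∀ b, c a b = false}

/-- The vertices of `β` all of whose incident edges are blue. -/
def XB {α β : Type*} (c : α → β → Bool) : Set β := {b | ∀ a, c a b = true}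

/-- The vertices of `β` all of whose incident edges are green. -/
def YB {α β : Type*} (c : α → β → Bool) : Set β := {b | ∀ a, c a b = false}

/-- `S`-type graph: `X(G) ≠ ∅` and `Y(G) ≠ ∅`. -/
def IsSType {α β : Type*} (c : α → β → Bool) : Prop :=
  ((XA c).Nonempty ∨ (XB c).Nonempty) ∧ ((YA c).Nonempty ∨ (YB c).Nonempty)

/-- `M`-type graph: there are partitions `A = A1 ∪ A1ᶜ`, `B = B1 ∪ B1ᶜ` with all four parts
nonempty such that `K(A1,B1)` and `K(A1ᶜ,B1ᶜ)` are blue and `K(A1,B1ᶜ)`, `K(A1ᶜ,B1)`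
are green. -/
def IsMType {α β : Type*} (c : α → β → Bool) : Prop :=
  ∃ (A1 : Set α) (B1 : Set β),
    A1.Nonempty ∧ A1ᶜ.Nonempty ∧ B1.Nonempty ∧ B1ᶜ.Nonempty ∧
    (∀ a ∈ A1, ∀ b ∈ B1, c a b = true) ∧
    (∀ a ∈ A1ᶜ, ∀ b ∈ B1ᶜ, c a b = true) ∧
    (∀ a ∈ A1, ∀ b ∈ B1ᶜ, c a b = false) ∧
    (∀ a ∈ A1ᶜ, ∀ b ∈ B1, c a b = false)

/-- For a subset `Bi ⊆ B`, the set `b(Bi) ⊆ A` of vertices sending blue edges to all of `Bi`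
and green edges to all of `Biᶜ`.  (Thus `b(B̄i) = bsetA c Biᶜ`.) -/
def bsetA {α β : Type*} (c : α → β → Bool) (Bi : Set β) : Set α :=
  {a | (∀ b ∈ Bi, c a b = true) ∧ ∀ b ∈ Biᶜ, c a b = false}

/-- For a subset `Ai ⊆ A`, the set `b(Ai) ⊆ B` of vertices sending blue edges to all of `Ai`
and green edges to all of `Aiᶜ`. -/
def bsetB {α β : Type*} (c : α → β → Bool) (Ai : Set α) : Set β :=
  {b | (∀ a ∈ Ai, c a b = true) ∧ ∀ a ∈ Aiᶜ, c a b = false}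

/-- `S1*`-type graph with `X(G) ∪ Y(G) ⊆ A`: `|B| = 1`, `|A1| ≥ 2` and `|A3| ≥ 2`
(where `A1 = X(G)`, `A3 = Y(G)`). -/
def IsS1StarA {α β : Type*} [Fintype β] (c : α → β → Bool) : Prop :=
  Fintype.card β = 1 ∧ 2 ≤ (XA c).ncard ∧ 2 ≤ (YA c).ncard

/-- `S1'`-type graph with `X(G) ∪ Y(G) ⊆ A`: `|A1| ≥ 2`, `|A3| ≥ 2`, `|B| ≥ 2`, and for
every partition `B = Bi ∪ B̄i` into nonempty parts, `b(Bi) ≠ ∅` and `b(B̄i) ≠ ∅`. -/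
def IsS1PrimeA {α β : Type*} [Fintype β] (c : α → β → Bool) : Prop :=
  2 ≤ (XA c).ncard ∧ 2 ≤ (YA c).ncard ∧ 2 ≤ Fintype.card β ∧
  ∀ Bi : Set β, Bi.Nonempty → Biᶜ.Nonempty →
    (bsetA c Bi).Nonempty ∧ (bsetA c Biᶜ).Nonempty

/-- `S1*`-type graph with `X(G) ∪ Y(G) ⊆ B`. -/
def IsS1StarB {α β : Type*} [Fintype α] (c : α → β → Bool) : Prop :=
  Fintype.card α = 1 ∧ 2 ≤ (XB c).ncard ∧ 2 ≤ (YB c).ncard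

/-- `S1'`-type graph with `X(G) ∪ Y(G) ⊆ B`. -/
def IsS1PrimeB {α β : Type*} [Fintype α] (c : α → β → Bool) : Prop :=
  2 ≤ (XB c).ncard ∧ 2 ≤ (YB c).ncard ∧ 2 ≤ Fintype.card α ∧
  ∀ Ai : Set α, Ai.Nonempty → Aiᶜ.Nonempty →
    (bsetB c Ai).Nonempty ∧ (bsetB c Aiᶜ).Nonempty

/-- `S1`-type graph: `S1*`-type or `S1'`-type. -/
def IsS1 {α β : Type*} [Fintype α] [Fintype β] (c : α → β → Bool) : Prop :=
  IsS1StarA c ∨ IsS1PrimeA c ∨ IsS1StarB c ∨ IsS1PrimeB c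

/-- `S2`-type graph: an `S`-type graph that is not `S1`-type. -/
def IsS2 {α β : Type*} [Fintype α] [Fintype β] (c : α → β → Bool) : Prop :=
  IsSType c ∧ ¬ IsS1 c

/-!
For a colouring `c` of `K(A,B)` and a pattern `p : B → Bool`, let `r p` be the number of values
of `p` and `F p` the set of `a ∈ A` with `c a = p`; put `q = (|A| - 2) / 2 ^ |B|`.

Lower bound: given a partition, pick for each tree `S` a colour `k S` in which it is connected,
and let `p b = !k S` for the tree `S ∋ b`. A vertex `a ∈ F p` is then a singleton, since all its
edges into a tree `S` meeting `B` have colour `!k S`, and at least `r p` trees meet `B`; so every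
partition has at least `r p + #F p` trees. Spreading `A` over the `2 ^ |B|` patterns, each
constant one `q + 1` times and every other one `q` times, makes this at least `q + 2` for all `p`.

Upper bound: if `A` has a vertex with only blue edges and one with only green edges, then for
every `p` the graph is covered by the singletons of `F p` and `r p` trees, one for each value `j`
of `p`, hanging from the vertex with only edges of colour `!j`. Since
`∑ p, (r p + #F p) = 2 * 2 ^ |B| - 2 + |A|`, some `p` needs at most `q + 2` trees. Otherwise
either some `b ∈ B` is monochromatic, and two trees suffice because `|B| ≤ |A|`, or some colour
class has no isolated vertex; it then has at most two components, or at least three, in which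
case the other colour class is connected.
-/

open SimpleGraph Finset Sum

section Partitions

variable {α β γ ι : Type*} {c : α → β → γ}

lemma HasMonoTreePartition.mono {j k : ℕ} (h : HasMonoTreePartition c j) (hjk : j ≤ k) :
    HasMonoTreePartition c k :=
  let ⟨P, hP, hPj⟩ := h
  ⟨P, hP, hPj.trans hjk⟩

lemma IsMonoTreePartition.eq_of_mem {P : Finset (Set (α ⊕ β))} (hP : IsMonoTreePartition c P)
    {S S' : Set (α ⊕ β)} {v : α ⊕ β} (hS : S ∈ P) (hS' : S' ∈ P) (hv : v ∈ S) (hv' : v ∈ S') :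
    S = S' :=
  (hP.2 v).unique ⟨hS, hv⟩ ⟨hS', hv'⟩

@[simp] lemma biColorGraph_adj_inl_inr {k : γ} {a : α} {b : β} :
    (biColorGraph c k).Adj (inl a) (inr b) ↔ c a b = k := by
  simp [biColorGraph]

@[simp] lemma biColorGraph_adj_inr_inl {k : γ} {a : α} {b : β} :
    (biColorGraph c k).Adj (inr b) (inl a) ↔ c a b = k := by
  simp [biColorGraph]

@[simp] lemma biColorGraph_not_adj_inl_inl {k : γ} {a a' : α} :
    ¬(biColorGraph c k).Adj (inl a) (inl a') := by
  simp [biColorGraph]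

@[simp] lemma biColorGraph_not_adj_inr_inr {k : γ} {b b' : β} :
    ¬(biColorGraph c k).Adj (inr b) (inr b') := by
  simp [biColorGraph]

lemma SimpleGraph.induce_connected_of_hub {V : Type*} {G : SimpleGraph V} {S : Set V} {h : V}
    (hh : h ∈ S) (hS : ∀ v ∈ S, v = h ∨ G.Adj v h ∨ ∃ w ∈ S, G.Adj v w ∧ G.Adj w h) :
    (G.induce S).Connected := by
  refine (connected_iff_exists_forall_reachable _).mpr ⟨⟨h, hh⟩, fun ⟨v, hv⟩ => ?_⟩
  rcases hS v hv with rfl | hvh | ⟨w, hw, hvw, hwh⟩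
  · rfl
  · exact (Adj.reachable (induce_adj.mpr hvh)).symm
  · exact ((Adj.reachable (v := ⟨w, hw⟩) (induce_adj.mpr hvw)).trans
      (Adj.reachable (induce_adj.mpr hwh))).symm

lemma SimpleGraph.exists_adj_of_induce_connected {V : Type*} {G : SimpleGraph V} {S : Set V}
    (hS : (G.induce S).Connected) {u v : V} (hu : u ∈ S) (hv : v ∈ S) (huv : u ≠ v) :
    ∃ w ∈ S, G.Adj u w := by
  have : Nontrivial S := ⟨⟨u, hu⟩, ⟨v, hv⟩, by simpa using huv⟩
  obtain ⟨⟨w, hw⟩, huw⟩ := hS.preconnected.exists_adj_of_nontrivial ⟨u, hu⟩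
  exact ⟨w, hw, huw⟩

lemma isMonoTreeSet_singleton [Nonempty γ] (v : α ⊕ β) : IsMonoTreeSet c {v} :=
  ⟨Classical.arbitrary γ, ⟨Preconnected.of_subsingleton⟩⟩

lemma hasMonoTreePartition_of_isMonoTreeSet_fiber [Fintype α] [Fintype β] [DecidableEq ι]
    (f : α ⊕ β → ι) (hf : ∀ v, IsMonoTreeSet c {w | f w = f v}) :
    HasMonoTreePartition c #(univ.image f) := by
  classical
  refine ⟨(univ.image f).image fun i => {w | f w = i},
    ⟨?_, fun v => ⟨{w | f w = f v},
      ⟨mem_image_of_mem _ (mem_image_of_mem f (mem_univ v)), rfl⟩, ?_⟩⟩, card_image_le⟩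
  · simp only [mem_image, mem_univ, true_and]
    rintro _ ⟨_, ⟨v, rfl⟩, rfl⟩
    exact hf v
  · rintro S ⟨hS, hvS⟩
    simp only [mem_image, mem_univ, true_and] at hS
    obtain ⟨_, ⟨u, rfl⟩, rfl⟩ := hS
    change f v = f u at hvS
    ext w
    change f w = f u ↔ f w = f v
    rw [hvS]

lemma hasMonoTreePartition_of_natCard_connectedComponent_le [Fintype α] [Fintype β] (k : γ)
    {K : ℕ} (h : Nat.card (biColorGraph c k).ConnectedComponent ≤ K) :
    HasMonoTreePartition c K := by
  classical
  refine (hasMonoTreePartition_of_isMonoTreeSet_fiber (biColorGraph c k).connectedComponentMk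
    fun v => ⟨k, (ConnectedComponent.maximal_connected_induce_supp _).1⟩).mono ?_
  rw [Nat.card_eq_fintype_card] at h
  exact (card_le_univ _).trans h

lemma hasMonoTreePartition_one_of_connected [Fintype α] [Fintype β] (k : γ)
    (h : (biColorGraph c k).Connected) : HasMonoTreePartition c 1 :=
  hasMonoTreePartition_of_natCard_connectedComponent_le k
    (Finite.card_le_one_iff_subsingleton.mpr h.preconnected.subsingleton_connectedComponent)

lemma connected_biColorGraph_of_forall_eq {k : γ} {a₀ : α} {b₀ : β} (ha₀ : ∀ b, c a₀ b = k)
    (hb₀ : ∀ a, c a b₀ = k) : (biColorGraph c k).Connected := by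
  refine (connected_iff_exists_forall_reachable _).mpr ⟨inr b₀, ?_⟩
  rintro (a | b)
  · exact Adj.reachable (by simp [hb₀])
  · exact (Adj.reachable (v := inl a₀) (by simp [hb₀])).trans (Adj.reachable (by simp [ha₀]))

lemma exists_connectedComponentMk_inl_eq {k : γ} (hk : ∀ v, ∃ w, (biColorGraph c k).Adj v w)
    (C : (biColorGraph c k).ConnectedComponent) :
    ∃ a, (biColorGraph c k).connectedComponentMk (inl a) = C := by
  induction C using ConnectedComponent.ind with | h v => ?_
  obtain ⟨w, hvw⟩ := hk v
  rcases v with a | b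
  · exact ⟨a, rfl⟩
  rcases w with a | b'
  · exact ⟨a, (ConnectedComponent.connectedComponentMk_eq_of_adj hvw).symm⟩
  · simp at hvw

lemma exists_connectedComponentMk_inr_eq {k : γ} (hk : ∀ v, ∃ w, (biColorGraph c k).Adj v w)
    (C : (biColorGraph c k).ConnectedComponent) :
    ∃ b, (biColorGraph c k).connectedComponentMk (inr b) = C := by
  induction C using ConnectedComponent.ind with | h v => ?_
  obtain ⟨w, hvw⟩ := hk v
  rcases v with a | b
  · rcases w with a' | b
    · simp at hvw
    · exact ⟨b, (ConnectedComponent.connectedComponentMk_eq_of_adj hvw).symm⟩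
  · exact ⟨b, rfl⟩

end Partitions

lemma exists_ne_ne_of_two_lt_natCard {X : Type*} (h : 2 < Nat.card X) (x y : X) :
    ∃ z, z ≠ x ∧ z ≠ y := by
  have : Finite X := Nat.finite_of_card_ne_zero (by omega)
  have := Fintype.ofFinite X
  classical
  obtain ⟨z, -, hz⟩ := exists_mem_notMem_of_card_lt_card (s := {x, y}) (t := univ)
    (card_le_two.trans_lt (by rwa [card_univ, ← Nat.card_eq_fintype_card]))
  simp only [mem_insert, mem_singleton, not_or] at hz
  exact ⟨z, hz⟩

section TwoColours

variable {α β : Type*} {c : α → β → Bool}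

lemma connected_biColorGraph_not_of_two_lt_natCard {k : Bool}
    (hk : ∀ v, ∃ w, (biColorGraph c k).Adj v w)
    (h3 : 2 < Nat.card (biColorGraph c k).ConnectedComponent) :
    (biColorGraph c !k).Connected := by
  set G := biColorGraph c k
  have hadj : ∀ a b, G.connectedComponentMk (inl a) ≠ G.connectedComponentMk (inr b) →
      (biColorGraph c !k).Adj (inl a) (inr b) := fun a b hab => by
    rw [biColorGraph_adj_inl_inr, Bool.eq_not_iff]
    exact fun hk => hab (ConnectedComponent.connectedComponentMk_eq_of_adj (by simpa [G]))
  have hAA : ∀ a a', (biColorGraph c !k).Reachable (inl a) (inl a') := fun a a' => by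
    obtain ⟨C, hCa, hCa'⟩ := exists_ne_ne_of_two_lt_natCard h3
      (G.connectedComponentMk (inl a)) (G.connectedComponentMk (inl a'))
    obtain ⟨b, rfl⟩ := exists_connectedComponentMk_inr_eq hk C
    exact (hadj a b hCa.symm).reachable.trans (hadj a' b hCa'.symm).reachable.symm
  have hBA : ∀ b, ∃ a, (biColorGraph c !k).Adj (inr b) (inl a) := fun b => by
    obtain ⟨C, hC, -⟩ := exists_ne_ne_of_two_lt_natCard h3
      (G.connectedComponentMk (inr b)) (G.connectedComponentMk (inr b))
    obtain ⟨a, rfl⟩ := exists_connectedComponentMk_inl_eq hk C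
    exact ⟨a, (hadj a b hC).symm⟩
  have : Nonempty G.ConnectedComponent := (Nat.card_pos_iff.mp (by omega)).1
  obtain ⟨a₀, -⟩ := exists_connectedComponentMk_inl_eq hk (Classical.arbitrary _)
  refine (connected_iff_exists_forall_reachable _).mpr ⟨inl a₀, ?_⟩
  rintro (a | b)
  · exact hAA a₀ a
  · obtain ⟨a, hba⟩ := hBA b
    exact (hAA a₀ a).trans hba.reachable.symm

lemma hasMonoTreePartition_two_of_forall_exists_adj [Fintype α] [Fintype β] {k : Bool}
    (hk : ∀ v, ∃ w, (biColorGraph c k).Adj v w) : HasMonoTreePartition c 2 := by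
  by_cases h : Nat.card (biColorGraph c k).ConnectedComponent ≤ 2
  · exact hasMonoTreePartition_of_natCard_connectedComponent_le k h
  · exact (hasMonoTreePartition_one_of_connected (!k)
      (connected_biColorGraph_not_of_two_lt_natCard hk (by omega))).mono (by norm_num)

lemma exists_forall_exists_ne_of_forall_eq [Fintype α] [Fintype β] (hα : 2 ≤ Fintype.card α)
    (hβα : Fintype.card β ≤ Fintype.card α) {k : Bool} {b₀ : β} (hb₀ : ∀ a, c a b₀ = k) :
    ∃ a₀, ∀ b, c a₀ b = k → ∃ a ≠ a₀, c a b = k := by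
  -- otherwise `a ↦ b` with `a` the only `k`-neighbour of `b` embeds `α` into `β` minus `b₀`
  by_contra! h
  choose f hfk hfu using h
  have hf : Function.Injective f := fun a a' e => by
    by_contra hne
    exact hfu a' a hne (e ▸ hfk a)
  have hb₀f : b₀ ∉ Set.range f := by
    rintro ⟨a, rfl⟩
    obtain ⟨a', ha'⟩ := Fintype.exists_ne_of_one_lt_card (by omega) a
    exact hfu a a' ha' (hb₀ a')
  have := Fintype.card_lt_of_injective_of_notMem f hf hb₀f
  omega

lemma hasMonoTreePartition_two_of_forall_eq [Fintype α] [Fintype β]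
    (hα : 2 ≤ Fintype.card α) (hβα : Fintype.card β ≤ Fintype.card α) {k : Bool} {b₀ : β}
    (hb₀ : ∀ a, c a b₀ = k) : HasMonoTreePartition c 2 := by
  classical
  obtain ⟨a₀, ha₀⟩ := exists_forall_exists_ne_of_forall_eq hα hβα hb₀
  let label : α ⊕ β → Bool := Sum.elim (fun a => a ≠ a₀) (fun b => ∃ a, c a b = k)
  refine (hasMonoTreePartition_of_isMonoTreeSet_fiber label fun v => ?_).mono
    ((card_le_univ _).trans_eq Fintype.card_bool)
  suffices ∀ j, IsMonoTreeSet c {w | label w = j} from this _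
  rintro (_ | _)
  · refine ⟨!k, induce_connected_of_hub (h := inl a₀) (by simp [label]) ?_⟩
    rintro (a | b) hv
    · exact Or.inl (by simpa [label] using hv)
    · have hb : ∀ a, c a b ≠ k := by simpa [label] using hv
      exact Or.inr (Or.inl (by simpa [Bool.eq_not_iff] using hb a₀))
  · obtain ⟨a₁⟩ := Fintype.card_pos_iff.mp (by omega : 0 < Fintype.card α)
    refine ⟨k, induce_connected_of_hub (h := inr b₀) (by simpa [label] using ⟨a₁, hb₀ a₁⟩) ?_⟩
    rintro (a | b) hv
    · exact Or.inr (Or.inl (by simp [hb₀]))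
    · obtain ⟨a, hab⟩ := by simpa [label] using hv
      obtain ⟨a', ha'a₀, ha'⟩ : ∃ a' ≠ a₀, c a' b = k := by
        by_cases ha : a = a₀
        · exact ha₀ b (ha ▸ hab)
        · exact ⟨a, ha, hab⟩
      exact Or.inr (Or.inr ⟨inl a', by simpa [label], by simpa, by simp [hb₀]⟩)

end TwoColours

section Patterns

variable {α β : Type*} {c : α → β → Bool}

open Classical in
/-- The tree `inl j` consists of the `b` with `p b = j` and of the `a` joined to one of them by
an edge of colour `!j`; the `a` with `c a = p` are the singletons `inr a`. -/
noncomputable def patternLabel (c : α → β → Bool) (p : β → Bool) : α ⊕ β → Bool ⊕ α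
  | inl a => if h : ∃ b, c a b ≠ p b then inl (p h.choose) else inr a
  | inr b => inl (p b)

lemma exists_of_patternLabel_inl_eq_inl {p : β → Bool} {a : α} {j : Bool}
    (h : patternLabel c p (inl a) = inl j) : ∃ b, p b = j ∧ c a b = !j := by
  simp only [patternLabel] at h
  split_ifs at h with hex
  obtain rfl := inl_injective h
  exact ⟨hex.choose, rfl, Bool.eq_not_iff.mpr hex.choose_spec⟩

lemma exists_eq_of_patternLabel_eq_inl {p : β → Bool} {v : α ⊕ β} {j : Bool}
    (h : patternLabel c p v = inl j) : ∃ b, p b = j := by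
  rcases v with a | b
  · obtain ⟨b, hb, -⟩ := exists_of_patternLabel_inl_eq_inl h
    exact ⟨b, hb⟩
  · exact ⟨b, inl_injective h⟩

lemma eq_inl_of_patternLabel_eq_inr {p : β → Bool} {v : α ⊕ β} {a : α}
    (h : patternLabel c p v = inr a) : v = inl a ∧ c a = p := by
  rcases v with a' | b
  · simp only [patternLabel] at h
    split_ifs at h with hex
    obtain rfl := inr_injective h
    simp only [not_exists, ne_eq, not_not] at hex
    exact ⟨rfl, funext hex⟩
  · cases h

lemma patternLabel_inl_of_forall_eq_not {p : β → Bool} {x : α} {j : Bool}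
    (hx : ∀ b, c x b = !j) (hj : ∃ b, p b = j) : patternLabel c p (inl x) = inl j := by
  obtain ⟨b, rfl⟩ := hj
  have hex : ∃ b', c x b' ≠ p b' := ⟨b, by simp [hx]⟩
  have hspec := hex.choose_spec
  simp only [patternLabel, dif_pos hex, inl.injEq]
  rw [hx] at hspec
  cases h₁ : p b <;> cases h₂ : p hex.choose <;> simp_all

lemma isMonoTreeSet_patternLabel_fiber (hmono : ∀ k, ∃ a, ∀ b, c a b = k) (p : β → Bool)
    (v : α ⊕ β) : IsMonoTreeSet c {w | patternLabel c p w = patternLabel c p v} := by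
  rcases hv : patternLabel c p v with j | a
  · obtain ⟨x, hx⟩ := hmono (!j)
    refine ⟨!j, induce_connected_of_hub (h := inl x)
      (patternLabel_inl_of_forall_eq_not hx (exists_eq_of_patternLabel_eq_inl hv)) ?_⟩
    rintro (a | b) hw
    · obtain ⟨b, hbj, hab⟩ := exists_of_patternLabel_inl_eq_inl hw
      exact Or.inr (Or.inr ⟨inr b, by simp [patternLabel, hbj], by simpa, by simp [hx]⟩)
    · exact Or.inr (Or.inl (by simp [hx]))
  · have : {w | patternLabel c p w = inr a} = {inl a} := by
      ext w
      refine ⟨fun hw => (eq_inl_of_patternLabel_eq_inr hw).1, ?_⟩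
      rintro rfl
      rw [← hv, (eq_inl_of_patternLabel_eq_inr hv).1]
      rfl
    rw [this]
    exact isMonoTreeSet_singleton _

lemma card_image_patternLabel_le [Fintype α] [Fintype β] [DecidableEq α] (p : β → Bool) :
    #(univ.image (patternLabel c p)) ≤ #(univ.image p) + #({a | c a = p} : Finset α) := by
  classical
  rw [← card_disjSum]
  refine card_le_card fun l hl => ?_
  obtain ⟨v, -, rfl⟩ := mem_image.mp hl
  rcases hv : patternLabel c p v with j | a
  · obtain ⟨b, hb⟩ := exists_eq_of_patternLabel_eq_inl hv
    simpa using ⟨b, hb⟩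
  · simpa using (eq_inl_of_patternLabel_eq_inr hv).2

theorem hasMonoTreePartition_card_image_add_card_filter [Fintype α] [Fintype β]
    (hmono : ∀ k, ∃ a, ∀ b, c a b = k) (p : β → Bool) :
    HasMonoTreePartition c (#(univ.image p) + #({a | c a = p} : Finset α)) := by
  classical
  exact (hasMonoTreePartition_of_isMonoTreeSet_fiber (patternLabel c p)
    (isMonoTreeSet_patternLabel_fiber hmono p)).mono (card_image_patternLabel_le p)

end Patterns

section Counting

variable {α β : Type*}

lemma card_image_add_ite_eq_two [Fintype β] [DecidableEq β] [Nonempty β] (p : β → Bool) :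
    #(univ.image p) + (if p ∈ univ.image (Function.const β) then 1 else 0) = 2 := by
  split_ifs with h
  · obtain ⟨k, -, rfl⟩ := mem_image.mp h
    rw [show univ.image (Function.const β k) = {k} from image_const univ_nonempty k, card_singleton]
  · have : univ.image p = univ := eq_univ_of_forall fun k => by
      by_contra hk
      simp only [mem_image, mem_univ, true_and, not_exists] at hk
      exact h (mem_image.mpr ⟨!k, mem_univ _, funext fun b => (Bool.eq_not_iff.mpr (hk b)).symm⟩)
    rw [this, card_univ, Fintype.card_bool]

lemma sum_card_image_add_two [Fintype β] [DecidableEq β] [Nonempty β] :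
    ∑ p : β → Bool, #(univ.image p) + 2 = 2 * 2 ^ Fintype.card β := by
  have hconst : #(univ.image (Function.const β : Bool → β → Bool)) = 2 := by
    rw [card_image_of_injective _ Function.const_injective, card_univ, Fintype.card_bool]
  calc ∑ p : β → Bool, #(univ.image p) + 2
      = ∑ p : β → Bool, (#(univ.image p) +
          if p ∈ univ.image (Function.const β) then 1 else 0) := by
        rw [sum_add_distrib, sum_boole, filter_mem_eq_inter, univ_inter, hconst, Nat.cast_id]
    _ = 2 * 2 ^ Fintype.card β := by
        rw [sum_congr rfl fun p _ => card_image_add_ite_eq_two p, sum_const, card_univ,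
          Fintype.card_fun, Fintype.card_bool, smul_eq_mul, mul_comm]

theorem exists_card_image_add_card_filter_le [Fintype α] [Fintype β] [DecidableEq β] [Nonempty β]
    (c : α → β → Bool) : ∃ p : β → Bool,
      #(univ.image p) + #({a | c a = p} : Finset α) ≤
        (Fintype.card α - 2) / 2 ^ Fintype.card β + 2 := by
  set q := (Fintype.card α - 2) / 2 ^ Fintype.card β
  by_contra! h
  have hsum := card_nsmul_le_sum univ
    (fun p => #(univ.image p) + #({a | c a = p} : Finset α)) (q + 3) fun p _ => h p
  rw [sum_add_distrib, ← card_eq_sum_card_fiberwise (by simp), card_univ, card_univ,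
    smul_eq_mul, Fintype.card_fun, Fintype.card_bool] at hsum
  have hr := sum_card_image_add_two (β := β)
  have hq : Fintype.card α - 2 < 2 ^ Fintype.card β * (q + 1) :=
    Nat.lt_mul_div_succ _ (Nat.two_pow_pos _)
  have : 2 ^ Fintype.card β * (q + 3) = 2 ^ Fintype.card β * (q + 1) + 2 * 2 ^ Fintype.card β := by
    ring
  omega

lemma exists_le_card_fiber {ι : Type*} [Fintype ι] [DecidableEq ι] [Nonempty ι] [Fintype α]
    (d : ι → ℕ) (hd : ∑ i, d i ≤ Fintype.card α) :
    ∃ f : α → ι, ∀ i, d i ≤ #({a | f a = i} : Finset α) := by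
  obtain ⟨e⟩ : Nonempty ((Σ i, Fin (d i)) ↪ α) :=
    Function.Embedding.nonempty_of_card_le (by simpa using hd)
  refine ⟨Function.extend e Sigma.fst fun _ => Classical.arbitrary ι, fun i => ?_⟩
  simpa using card_le_card_of_injOn (s := univ) (fun j : Fin (d i) => e ⟨i, j⟩)
    (fun j _ => by simp [e.injective.extend_apply]) (fun j _ j' _ h => by simpa using e.injective h)

end Counting

section Bounds

variable {α β : Type*} {c : α → β → Bool}

lemma IsMonoTreePartition.singleton_inl_mem {P : Finset (Set (α ⊕ β))}
    (hP : IsMonoTreePartition c P) {g : Set (α ⊕ β) → Bool}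
    (hg : ∀ S ∈ P, ((biColorGraph c !(g S)).induce S).Connected) {a : α}
    (ha : ∀ b, ∀ S ∈ P, inr b ∈ S → c a b = g S) : {inl a} ∈ P := by
  obtain ⟨S, ⟨hS, haS⟩, -⟩ := hP.2 (inl a)
  suffices S = {inl a} from this ▸ hS
  refine Set.eq_singleton_iff_unique_mem.mpr ⟨haS, fun w hw => ?_⟩
  by_contra hne
  obtain ⟨_ | b, hb, hab⟩ := exists_adj_of_induce_connected (hg S hS) haS hw (Ne.symm hne)
  · simp at hab
  · rw [biColorGraph_adj_inl_inr, ha b S hS hb] at hab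
    simp at hab

theorem IsMonoTreePartition.exists_card_image_add_card_filter_le [Fintype α] [Fintype β]
    {P : Finset (Set (α ⊕ β))} (hP : IsMonoTreePartition c P) :
    ∃ p : β → Bool, #(univ.image p) + #({a | c a = p} : Finset α) ≤ #P := by
  classical
  choose T hTP hT using fun v => (hP.2 v).exists
  let g : Set (α ⊕ β) → Bool := fun S => !((biColorGraph c true).induce S).Connected
  have hg : ∀ S ∈ P, ((biColorGraph c !(g S)).induce S).Connected := fun S hS => by
    by_cases hb : ((biColorGraph c true).induce S).Connected
    · simp [g, hb]
    · obtain ⟨_ | _, hk⟩ := hP.1 S hS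
      · simpa [g, hb]
      · exact absurd hk hb
  set p : β → Bool := fun b => g (T (inr b))
  set F : Finset α := {a | c a = p}
  refine ⟨p, ?_⟩
  have hsingle : ∀ a ∈ F, {inl a} ∈ P := fun a ha => hP.singleton_inl_mem hg fun b S hS hbS => by
    rw [hP.eq_of_mem hS (hTP _) hbS (hT _)]
    exact congrFun (mem_filter.mp ha).2 b
  have hdisj : Disjoint (F.image fun a => ({inl a} : Set (α ⊕ β))) (univ.image (T ∘ inr)) := by
    simp only [Finset.disjoint_left, mem_image, mem_univ, true_and, Function.comp_apply, not_exists]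
    rintro _ ⟨a, -, rfl⟩ b hb
    simpa [hb] using hT (inr b)
  calc #(univ.image p) + #F
      ≤ #(univ.image (T ∘ inr)) + #(F.image fun a => ({inl a} : Set (α ⊕ β))) := by
        rw [card_image_of_injective (f := fun a => ({inl a} : Set (α ⊕ β))) _
            (Set.singleton_injective.comp inl_injective),
          show univ.image p = (univ.image (T ∘ inr)).image g by rw [image_image]; rfl]
        exact Nat.add_le_add_right card_image_le _
    _ = #(F.image (fun a => ({inl a} : Set (α ⊕ β))) ∪ univ.image (T ∘ inr)) := by
        rw [card_union_of_disjoint hdisj, add_comm]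
    _ ≤ #P := card_le_card (union_subset (fun S hS => by
          obtain ⟨a, ha, rfl⟩ := mem_image.mp hS
          exact hsingle a ha)
        fun S hS => by
          obtain ⟨b, -, rfl⟩ := mem_image.mp hS
          exact hTP _)

theorem hasMonoTreePartition_div_two_pow_add_two [Fintype α] [Fintype β] [DecidableEq β]
    [Nonempty β] (hα : 2 ≤ Fintype.card α) (hβα : Fintype.card β ≤ Fintype.card α)
    (c : α → β → Bool) :
    HasMonoTreePartition c ((Fintype.card α - 2) / 2 ^ Fintype.card β + 2) := by
  have of_two : HasMonoTreePartition c 2 →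
      HasMonoTreePartition c ((Fintype.card α - 2) / 2 ^ Fintype.card β + 2) :=
    fun h => h.mono (Nat.le_add_left 2 _)
  by_cases hB : ∃ b k, ∀ a, c a b = k
  · obtain ⟨b, k, hb⟩ := hB
    exact of_two (hasMonoTreePartition_two_of_forall_eq hα hβα hb)
  by_cases hA : ∀ k, ∃ a, ∀ b, c a b = k
  · obtain ⟨p, hp⟩ := exists_card_image_add_card_filter_le c
    exact (hasMonoTreePartition_card_image_add_card_filter hA p).mono hp
  simp only [not_exists, not_forall] at hA hB
  obtain ⟨k, hk⟩ := hA
  refine of_two (hasMonoTreePartition_two_of_forall_exists_adj (k := !k) ?_)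
  rintro (a | b)
  · obtain ⟨b, hb⟩ := hk a
    exact ⟨inr b, by simpa [Bool.eq_not_iff] using hb⟩
  · obtain ⟨a, ha⟩ := hB b k
    exact ⟨inl a, by simpa [Bool.eq_not_iff] using ha⟩

theorem exists_coloring_div_two_pow_add_two_le_card [Fintype α] [Fintype β] [DecidableEq β]
    [Nonempty β] (hα : 2 ≤ Fintype.card α) :
    ∃ c : α → β → Bool, ∀ P, IsMonoTreePartition c P →
      (Fintype.card α - 2) / 2 ^ Fintype.card β + 2 ≤ #P := by
  have hq := Nat.mul_div_le (Fintype.card α - 2) (2 ^ Fintype.card β)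
  generalize (Fintype.card α - 2) / 2 ^ Fintype.card β = q at hq ⊢
  -- pattern `p` is used `q + 2 - r p` times: `q + 1` times if constant, `q` times otherwise
  have hsum : ∑ p : β → Bool, (q + 2 - #(univ.image p)) + ∑ p : β → Bool, #(univ.image p) =
      2 ^ Fintype.card β * (q + 2) := by
    rw [← sum_add_distrib, sum_congr rfl fun p _ => Nat.sub_add_cancel (by
        have := (card_le_univ (univ.image p)).trans_eq Fintype.card_bool
        omega),
      sum_const, card_univ, Fintype.card_fun, Fintype.card_bool, smul_eq_mul]
  have hd : ∑ p : β → Bool, (q + 2 - #(univ.image p)) ≤ Fintype.card α := by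
    have := sum_card_image_add_two (β := β)
    have : 2 ^ Fintype.card β * (q + 2) = 2 ^ Fintype.card β * q + 2 * 2 ^ Fintype.card β := by
      ring
    omega
  obtain ⟨f, hf⟩ := exists_le_card_fiber _ hd
  refine ⟨f, fun P hP => ?_⟩
  obtain ⟨p, hp⟩ := hP.exists_card_image_add_card_filter_le
  have := hf p
  omega

end Bounds

lemma toNat_fdiv_two_pow_add_two {m : ℕ} (n : ℕ) (hm : 2 ≤ m) :
    (((m : ℤ) - 2).fdiv (2 ^ n) + 2).toNat = (m - 2) / 2 ^ n + 2 := by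
  rw [show (m : ℤ) - 2 = ((m - 2 : ℕ) : ℤ) by omega, show (2 : ℤ) ^ n = ((2 ^ n : ℕ) : ℤ) by simp,
    ← Int.ofNat_fdiv]
  generalize (m - 2) / 2 ^ n = q
  omega

/-- **Kaneko–Kano–Suzuki.** For `1 ≤ n ≤ m`, the monochromatic tree
partition number of 2-edge-colored `K(m,n)` is `⌊(m - 2) / 2^n⌋ + 2` (floor division
over the integers). -/
theorem t2_complete_bipartite (m n : ℕ) (h1 : 1 ≤ n) (h2 : n ≤ m) :
    IsLeast {k : ℕ | ∀ c : Fin m → Fin n → Bool, HasMonoTreePartition c k}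
      ((((m : ℤ) - 2).fdiv (2 ^ n) + 2).toNat) := by
  have : Nonempty (Fin n) := ⟨⟨0, h1⟩⟩
  obtain rfl | hm : m = 1 ∨ 2 ≤ m := by omega
  · obtain rfl : n = 1 := by omega
    rw [show ((((1 : ℕ) : ℤ) - 2).fdiv (2 ^ 1) + 2).toNat = 1 by decide]
    refine ⟨fun c => hasMonoTreePartition_one_of_connected (c 0 0)
      (connected_biColorGraph_of_forall_eq (a₀ := 0) (b₀ := 0) ?_ ?_), fun k hk => ?_⟩
    · exact fun b => by rw [Subsingleton.elim b 0]
    · exact fun a => by rw [Subsingleton.elim a 0]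
    obtain ⟨P, hP, hPk⟩ := hk fun _ _ => true
    obtain ⟨S, ⟨hS, -⟩, -⟩ := hP.2 (inl 0)
    exact (card_pos.mpr ⟨S, hS⟩).trans_le hPk
  · rw [toNat_fdiv_two_pow_add_two n hm]
    refine ⟨fun c => ?_, fun k hk => ?_⟩
    · simpa using hasMonoTreePartition_div_two_pow_add_two (by simpa) (by simpa) c
    · obtain ⟨c, hc⟩ :=
        exists_coloring_div_two_pow_add_two_le_card (α := Fin m) (β := Fin n) (by simpa)
      obtain ⟨P, hP, hPk⟩ := hk c
      simpa using (hc P hP).trans hPk
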